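/- arXiv:1511.02403 — 4 statements merged into one kernel-verified Lean document; each statement's English description precedes it below -/
import Mathlib

section
/- Let q be a quadratic form of signature (1,n) on a real vector space V, and let x, y be two vectors with q(x) > 0 and q(y) > 0. Then x and y lie in the same connected component of the positive cone if and only if the associated bilinear form satisfies b(x,y) > 0. -/
/-!
Write `b v w = t v * t w - ⟪s v, s w⟫` with a time coordinate `t` and a Euclidean part `s`.
The positive cone is then the disjoint union of the future cone `‖s v‖ < t v` and the past cone
`‖s v‖ < -t v`. Both are convex, and `t` vanishes on neither, so two positive vectors lie in the
same component iff `0 < t x * t y`. By Cauchy–Schwarz `|⟪s x, s y⟫| ≤ ‖s x‖ ‖s y‖ < |t x * t y|`,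
so `b x y` has the sign of `t x * t y`.
-/

open Set

theorem IsPreconnected.mul_pos_of_ne_zero {X α : Type*} [TopologicalSpace X] [Ring α]
    [LinearOrder α] [IsStrictOrderedRing α] [TopologicalSpace α] [OrderClosedTopology α]
    {C : Set X} (hC : IsPreconnected C) {f : X → α} (hf : ContinuousOn f C)
    (hf₀ : ∀ z ∈ C, f z ≠ 0) {x y : X} (hx : x ∈ C) (hy : y ∈ C) : 0 < f x * f y := by
  by_contra! hxy
  obtain ⟨z, hz, hfz⟩ : (0 : α) ∈ f '' C := by
    rcases (hf₀ x hx).lt_or_gt with hx₀ | hx₀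
    · exact hC.intermediate_value hx hy hf ⟨hx₀.le, nonneg_of_mul_nonpos_right hxy hx₀⟩
    · exact hC.intermediate_value hy hx hf ⟨nonpos_of_mul_nonpos_right hxy hx₀, hx₀.le⟩
  exact hf₀ z hz hfz

section InnerProduct

variable {E : Type*} [NormedAddCommGroup E] [InnerProductSpace ℝ E]

theorem real_inner_self_lt_mul_self_iff (u : E) (a : ℝ) : inner ℝ u u < a * a ↔ ‖u‖ < |a| := by
  rw [real_inner_self_eq_norm_mul_norm, ← abs_mul_abs_self a,
    mul_self_lt_mul_self_iff (norm_nonneg u) (abs_nonneg a)]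

theorem sub_real_inner_pos_iff {u w : E} {a c : ℝ} (hu : ‖u‖ < |a|) (hw : ‖w‖ < |c|) :
    0 < a * c - inner ℝ u w ↔ 0 < a * c := by
  have hlt : |inner ℝ u w| < |a * c| :=
    calc |inner ℝ u w| ≤ ‖u‖ * ‖w‖ := abs_real_inner_le_norm u w
      _ < |a| * |c| := mul_lt_mul'' hu hw (norm_nonneg u) (norm_nonneg w)
      _ = |a * c| := (abs_mul a c).symm
  obtain ⟨hlow, hhigh⟩ := abs_lt.1 hlt
  rw [sub_pos]
  constructor
  · intro h
    by_contra! hac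
    rw [abs_of_nonpos hac] at hlow hhigh
    linarith
  · intro hac
    rw [abs_of_pos hac] at hhigh
    exact hhigh

end InnerProduct

section TimelikeCone

variable {V E : Type*} [AddCommGroup V] [Module ℝ V] [SeminormedAddCommGroup E] [NormedSpace ℝ E]

/-- For `q v = t v ^ 2 - ‖s v‖ ^ 2` this is the positive cone `{v | 0 < q v}`. -/
def timelikeCone (t : V →ₗ[ℝ] ℝ) (s : V →ₗ[ℝ] E) : Set V := {v | ‖s v‖ < |t v|}

variable {t : V →ₗ[ℝ] ℝ} {s : V →ₗ[ℝ] E}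

theorem ne_zero_of_mem_timelikeCone {v : V} (hv : v ∈ timelikeCone t s) : t v ≠ 0 :=
  abs_pos.1 ((norm_nonneg _).trans_lt hv)

theorem convex_setOf_norm_lt (t : V →ₗ[ℝ] ℝ) (s : V →ₗ[ℝ] E) : Convex ℝ {v | ‖s v‖ < t v} := by
  have h : ConvexOn ℝ univ fun v => ‖s v‖ - t v :=
    ((convexOn_norm convex_univ).comp_linearMap s).sub (t.concaveOn convex_univ)
  simpa [sub_neg] using h.convex_lt 0

theorem segment_subset_timelikeCone {x y : V} (hx : x ∈ timelikeCone t s)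
    (hy : y ∈ timelikeCone t s) (hxy : 0 < t x * t y) : segment ℝ x y ⊆ timelikeCone t s := by
  have of_future : ∀ τ : V →ₗ[ℝ] ℝ, (∀ v, τ v ≤ |t v|) → ‖s x‖ < τ x → ‖s y‖ < τ y →
      segment ℝ x y ⊆ timelikeCone t s := fun τ hτ hxτ hyτ =>
    ((convex_setOf_norm_lt τ s).segment_subset hxτ hyτ).trans fun v hv => hv.trans_le (hτ v)
  rcases mul_pos_iff.1 hxy with ⟨hx₀, hy₀⟩ | ⟨hx₀, hy₀⟩
  · refine of_future t (fun v => le_abs_self (t v)) ?_ ?_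
    · simpa [timelikeCone, abs_of_pos hx₀] using hx
    · simpa [timelikeCone, abs_of_pos hy₀] using hy
  · refine of_future (-t) (fun v => neg_le_abs (t v)) ?_ ?_
    · simpa [timelikeCone, abs_of_neg hx₀] using hx
    · simpa [timelikeCone, abs_of_neg hy₀] using hy

variable [TopologicalSpace V] [IsTopologicalAddGroup V] [ContinuousSMul ℝ V]

theorem connectedComponentIn_timelikeCone_eq_iff (ht : Continuous t) {x y : V}
    (hx : x ∈ timelikeCone t s) (hy : y ∈ timelikeCone t s) :
    connectedComponentIn (timelikeCone t s) x = connectedComponentIn (timelikeCone t s) y ↔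
      0 < t x * t y := by
  constructor
  · intro h
    have hy' : y ∈ connectedComponentIn (timelikeCone t s) x := h ▸ mem_connectedComponentIn hy
    exact isPreconnected_connectedComponentIn.mul_pos_of_ne_zero ht.continuousOn
      (fun z hz => ne_zero_of_mem_timelikeCone (connectedComponentIn_subset _ _ hz))
      (mem_connectedComponentIn hx) hy'
  · intro h
    exact connectedComponentIn_eq <| (convex_segment x y).isPreconnected.subset_connectedComponentIn
      (left_mem_segment ℝ x y) (segment_subset_timelikeCone hx hy h) (right_mem_segment ℝ x y)

end TimelikeCone

/-- two positive vectors for a form of signature (1,n) lie in the same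
connected component of the positive cone iff b(x,y) > 0. -/
theorem same_component_iff_positive_pairing (n : ℕ)
    (V : Type*) [NormedAddCommGroup V] [NormedSpace ℝ V]
    (b : V → V → ℝ) (e : V ≃ₗ[ℝ] (Fin (n+1) → ℝ))
    (hb : ∀ v w, b v w = (e v 0) * (e w 0) - ∑ i : Fin n, (e v i.succ) * (e w i.succ))
    (x y : V) (hx : 0 < b x x) (hy : 0 < b y y) :
    connectedComponentIn {v | 0 < b v v} x = connectedComponentIn {v | 0 < b v v} y
      ↔ 0 < b x y := by
  have : FiniteDimensional ℝ V := e.symm.finiteDimensional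
  let t : V →ₗ[ℝ] ℝ := (LinearMap.proj 0).comp e.toLinearMap
  let s : V →ₗ[ℝ] EuclideanSpace ℝ (Fin n) :=
    (WithLp.linearEquiv 2 ℝ (Fin n → ℝ)).symm.toLinearMap ∘ₗ LinearMap.funLeft ℝ ℝ Fin.succ ∘ₗ
      e.toLinearMap
  have hb' : ∀ v w, b v w = t v * t w - inner ℝ (s v) (s w) := by
    intro v w
    simp [hb, s, t, PiLp.inner_apply, mul_comm]
  have hcone : {v | 0 < b v v} = timelikeCone t s := by
    ext v
    simp only [mem_ofPred_eq, hb', sub_pos, real_inner_self_lt_mul_self_iff, timelikeCone]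
  have hx' : x ∈ timelikeCone t s := hcone ▸ hx
  have hy' : y ∈ timelikeCone t s := hcone ▸ hy
  rw [hcone, connectedComponentIn_timelikeCone_eq_iff t.continuous_of_finiteDimensional hx' hy',
    hb', sub_real_inner_pos_iff hx' hy']
end

section
/- Let q be a quadratic form of signature (1,n) on a real vector space V with n ≥ 1. If x, y are nonzero vectors with q(x) ≥ 0, q(y) ≥ 0 lying in the closure of the same connected component of the positive cone, then b(x,y) ≥ 0, with equality only if x and y are proportional isotropic vectors. -/
/-!
In coordinates `(t, u) ∈ ℝ × ℝⁿ` the form is `t t' - ⟪u, u'⟫`, and the positive cone is the disjoint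
union of the open sets `‖u‖ < t` and `‖u‖ < -t`; so a component, and its closure, lies in one of the
closed half-cones `‖u‖ ≤ ±t`. There Cauchy–Schwarz gives `⟪u, u'⟫ ≤ ‖u‖ ‖u'‖ ≤ t t'`, and equality
forces `‖u‖ = t`, `‖u'‖ = t'` and `u, u'` positively parallel.
-/

open scoped RealInnerProductSpace

section Lorentz

variable {E : Type*} [NormedAddCommGroup E]

variable (E) in
def futureCone : Set (ℝ × E) := {p | ‖p.2‖ ≤ p.1}

lemma isClosed_futureCone : IsClosed (futureCone E) :=
  isClosed_le continuous_snd.norm continuous_fst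

lemma fst_pos_of_mem_futureCone {p : ℝ × E} (hp : p ∈ futureCone E) (h0 : p ≠ 0) :
    0 < p.1 := by
  by_contra! h
  have h2 : p.2 = 0 := norm_le_zero_iff.1 (hp.trans h)
  exact h0 (Prod.ext (le_antisymm h ((norm_nonneg _).trans hp)) h2)

variable [InnerProductSpace ℝ E]

def lorentzForm (p q : ℝ × E) : ℝ := p.1 * q.1 - ⟪p.2, q.2⟫

lemma lorentzForm_self (p : ℝ × E) : lorentzForm p p = p.1 ^ 2 - ‖p.2‖ ^ 2 := by
  rw [lorentzForm, real_inner_self_eq_norm_sq]; ring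

lemma lorentzForm_neg_neg (p q : ℝ × E) : lorentzForm (-p) (-q) = lorentzForm p q := by
  simp [lorentzForm]

lemma lorentzForm_self_pos_iff {p : ℝ × E} :
    0 < lorentzForm p p ↔ ‖p.2‖ < p.1 ∨ ‖p.2‖ < -p.1 := by
  rw [lorentzForm_self, sub_pos, sq_lt_sq, abs_norm, lt_abs]

lemma lorentzForm_nonneg_of_mem_futureCone {p q : ℝ × E} (hp : p ∈ futureCone E)
    (hq : q ∈ futureCone E) : 0 ≤ lorentzForm p q :=
  sub_nonneg.2 <| (real_inner_le_norm _ _).trans <|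
    mul_le_mul hp hq (norm_nonneg _) ((norm_nonneg _).trans hp)

lemma lorentzForm_eq_zero_of_mem_futureCone {p q : ℝ × E} (hp : p ∈ futureCone E)
    (hq : q ∈ futureCone E) (hp0 : p ≠ 0) (hq0 : q ≠ 0) (h : lorentzForm p q = 0) :
    lorentzForm p p = 0 ∧ lorentzForm q q = 0 ∧ q = (q.1 / p.1) • p := by
  have ha := fst_pos_of_mem_futureCone hp hp0
  have hc := fst_pos_of_mem_futureCone hq hq0
  obtain ⟨a, u⟩ := p
  obtain ⟨c, w⟩ := q
  simp only [futureCone, Set.mem_ofPred_eq, lorentzForm] at *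
  have hcs : ⟪u, w⟫ ≤ ‖u‖ * ‖w‖ := real_inner_le_norm u w
  have hw_le : ‖u‖ * ‖w‖ ≤ ‖u‖ * c := mul_le_mul_of_nonneg_left hq (norm_nonneg _)
  have hu_le : ‖u‖ * c ≤ a * c := mul_le_mul_of_nonneg_right hp hc.le
  have hu : ‖u‖ = a := mul_right_cancel₀ hc.ne' (by linarith)
  have hw : ‖w‖ = c := mul_left_cancel₀ (hu ▸ ha.ne') (by linarith)
  have hcol : c • u = a • w := by
    rw [← hu, ← hw]
    exact inner_eq_norm_mul_iff_real.1 (by linarith)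
  refine ⟨by rw [real_inner_self_eq_norm_sq, hu]; ring,
    by rw [real_inner_self_eq_norm_sq, hw]; ring, ?_⟩
  ext
  · exact (div_mul_cancel₀ c ha.ne').symm
  · simp only [Prod.smul_mk, div_eq_inv_mul, mul_smul, hcol, inv_smul_smul₀ ha.ne']

lemma IsPreconnected.closure_subset_futureCone_or_neg {X : Type*} [TopologicalSpace X]
    {f : X → ℝ × E} (hf : Continuous f) {S : Set X} (hS : IsPreconnected S)
    (hpos : S ⊆ {v | 0 < lorentzForm (f v) (f v)}) :
    closure S ⊆ f ⁻¹' futureCone E ∨ closure S ⊆ (-f) ⁻¹' futureCone E := by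
  have hopen {g : X → ℝ × E} (hg : Continuous g) : IsOpen {v | ‖(g v).2‖ < (g v).1} :=
    isOpen_lt hg.snd.norm hg.fst
  have hclosure {g : X → ℝ × E} (hg : Continuous g) (hS : S ⊆ {v | ‖(g v).2‖ < (g v).1}) :
      closure S ⊆ g ⁻¹' futureCone E :=
    closure_minimal (hS.trans fun _ (hv : ‖_‖ < _) => hv.le) (isClosed_futureCone.preimage hg)
  have hdisj : Disjoint {v | ‖(f v).2‖ < (f v).1} {v | ‖((-f) v).2‖ < ((-f) v).1} := by
    refine Set.disjoint_left.2 fun v hv hv' => ?_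
    simp only [Set.mem_ofPred_eq, Pi.neg_apply, Prod.snd_neg, Prod.fst_neg, norm_neg] at hv hv'
    linarith [norm_nonneg (f v).2]
  have hcover : S ⊆ {v | ‖(f v).2‖ < (f v).1} ∪ {v | ‖((-f) v).2‖ < ((-f) v).1} :=
    fun v hv => by simpa using lorentzForm_self_pos_iff.1 (hpos hv)
  exact (hS.subset_or_subset (hopen hf) (hopen hf.neg) hdisj hcover).imp
    (hclosure hf) (hclosure hf.neg)

theorem pairing_nonneg_of_map_mem_futureCone {V : Type*} [AddCommGroup V] [Module ℝ V]
    {b : V → V → ℝ} (f : V →ₗ[ℝ] ℝ × E) (hf : Function.Injective f)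
    (hb : ∀ v w, b v w = lorentzForm (f v) (f w)) {x y : V} (hx0 : x ≠ 0) (hy0 : y ≠ 0)
    (hx : f x ∈ futureCone E) (hy : f y ∈ futureCone E) :
    0 ≤ b x y ∧ (b x y = 0 → b x x = 0 ∧ b y y = 0 ∧ ∃ t : ℝ, y = t • x) := by
  simp only [hb]
  refine ⟨lorentzForm_nonneg_of_mem_futureCone hx hy, fun h => ?_⟩
  obtain ⟨hxx, hyy, hprop⟩ := lorentzForm_eq_zero_of_mem_futureCone hx hy
    ((map_ne_zero_iff f hf).2 hx0) ((map_ne_zero_iff f hf).2 hy0) h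
  exact ⟨hxx, hyy, _, hf (by rw [map_smul]; exact hprop)⟩

end Lorentz

def minkowskiCoords (n : ℕ) : (Fin (n + 1) → ℝ) ≃ₗ[ℝ] ℝ × EuclideanSpace ℝ (Fin n) :=
  (Fin.consLinearEquiv ℝ fun _ => ℝ).symm.trans
    ((LinearEquiv.refl ℝ ℝ).prodCongr (WithLp.linearEquiv 2 ℝ (Fin n → ℝ)).symm)

lemma lorentzForm_minkowskiCoords {n : ℕ} (v w : Fin (n + 1) → ℝ) :
    lorentzForm (minkowskiCoords n v) (minkowskiCoords n w) =
      v 0 * w 0 - ∑ i : Fin n, v i.succ * w i.succ := by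
  simp [minkowskiCoords, lorentzForm, PiLp.inner_apply, Fin.tail, mul_comm]

theorem pairing_nonneg_on_closed_cone_general (n : ℕ)
    (V : Type*) [NormedAddCommGroup V] [NormedSpace ℝ V]
    (b : V → V → ℝ) (e : V ≃ₗ[ℝ] (Fin (n+1) → ℝ))
    (hb : ∀ v w, b v w = (e v 0) * (e w 0) - ∑ i : Fin n, (e v i.succ) * (e w i.succ))
    (x y : V) (hx0 : x ≠ 0) (hy0 : y ≠ 0)
    (hcl : ∃ z : V, 0 < b z z ∧
      x ∈ closure (connectedComponentIn {v | 0 < b v v} z) ∧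
      y ∈ closure (connectedComponentIn {v | 0 < b v v} z)) :
    0 ≤ b x y ∧ (b x y = 0 → b x x = 0 ∧ b y y = 0 ∧ ∃ t : ℝ, y = t • x) := by
  obtain ⟨z, -, hxz, hyz⟩ := hcl
  have : FiniteDimensional ℝ V := e.symm.finiteDimensional
  let f : V →ₗ[ℝ] ℝ × EuclideanSpace ℝ (Fin n) := (e.trans (minkowskiCoords n)).toLinearMap
  have hf : Function.Injective f := (e.trans (minkowskiCoords n)).injective
  have hbf (v w : V) : b v w = lorentzForm (f v) (f w) := by
    rw [hb]; exact (lorentzForm_minkowskiCoords _ _).symm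
  simp only [hbf] at hxz hyz
  rcases isPreconnected_connectedComponentIn.closure_subset_futureCone_or_neg
      f.continuous_of_finiteDimensional (connectedComponentIn_subset _ _) with hC | hC
  · exact pairing_nonneg_of_map_mem_futureCone f hf hbf hx0 hy0 (hC hxz) (hC hyz)
  · exact pairing_nonneg_of_map_mem_futureCone (-f) (neg_injective.comp hf)
      (by simpa [lorentzForm_neg_neg] using hbf) hx0 hy0 (hC hxz) (hC hyz)

/-- two nonzero vectors with q ≥ 0 in the closure of the same component of the
positive cone pair nonnegatively, with equality only for proportional isotropic vectors. -/
theorem pairing_nonneg_on_closed_cone (n : ℕ) (hn : 1 ≤ n)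
    (V : Type*) [NormedAddCommGroup V] [NormedSpace ℝ V]
    (b : V → V → ℝ) (e : V ≃ₗ[ℝ] (Fin (n+1) → ℝ))
    (hb : ∀ v w, b v w = (e v 0) * (e w 0) - ∑ i : Fin n, (e v i.succ) * (e w i.succ))
    (x y : V) (hx0 : x ≠ 0) (hy0 : y ≠ 0) (hx : 0 ≤ b x x) (hy : 0 ≤ b y y)
    (hcl : ∃ z : V, 0 < b z z ∧
      x ∈ closure (connectedComponentIn {v | 0 < b v v} z) ∧
      y ∈ closure (connectedComponentIn {v | 0 < b v v} z)) :
    0 ≤ b x y ∧ (b x y = 0 → b x x = 0 ∧ b y y = 0 ∧ ∃ t : ℝ, y = t • x) :=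
  pairing_nonneg_on_closed_cone_general n V b e hb x y hx0 hy0 hcl
end

section
/- Let L be a lattice with an integral symmetric bilinear form of signature (1,k), let h ∈ L with ⟨h,h⟩ > 0, let x ∈ L be isotropic with ⟨x,h⟩ > 0, and let p ∈ L satisfy ⟨p,p⟩ = -2, ⟨p,h⟩ > 0, and ⟨x,p⟩ < 0. Then the reflected class x' = x + ⟨x,p⟩·p is isotropic and satisfies 0 < ⟨x',h⟩ < ⟨x,h⟩. -/
private lemma aux_pos {k : ℕ} (f g : Fin k → ℝ) (a b : ℝ)
    (hf : ∑ i, f i ^ 2 ≤ a ^ 2) (hg : ∑ i, g i ^ 2 ≤ b ^ 2)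
    (hpos : 0 < a * b - ∑ i, f i * g i) : 0 < a * b := by
  have cs := Finset.sum_mul_sq_le_sq_mul_sq Finset.univ f g
  have hf0 : (0:ℝ) ≤ ∑ i, f i ^ 2 := Finset.sum_nonneg fun i _ => sq_nonneg _
  have hg0 : (0:ℝ) ≤ ∑ i, g i ^ 2 := Finset.sum_nonneg fun i _ => sq_nonneg _
  nlinarith [cs, sq_nonneg (a * b + ∑ i, f i * g i), sq_nonneg (a*b)]

private lemma aux_final {k : ℕ} (f g : Fin k → ℝ) (a b : ℝ)
    (hf : ∑ i, f i ^ 2 ≤ a ^ 2) (hg : ∑ i, g i ^ 2 < b ^ 2)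
    (ha : a ≠ 0) (hab : 0 < a * b) : 0 < a * b - ∑ i, f i * g i := by
  have cs := Finset.sum_mul_sq_le_sq_mul_sq Finset.univ f g
  have hg0 : (0:ℝ) ≤ ∑ i, g i ^ 2 := Finset.sum_nonneg fun i _ => sq_nonneg _
  have ha2 : 0 < a ^ 2 := by positivity
  nlinarith [cs, sq_nonneg (a * b + ∑ i, f i * g i)]

/-- in a lattice of signature (1,k), reflecting an isotropic class x with
⟨x,h⟩ > 0 in a (-2)-class p with ⟨p,h⟩ > 0, ⟨x,p⟩ < 0 yields an isotropic class x' with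
0 < ⟨x',h⟩ < ⟨x,h⟩. -/
theorem reflected_isotropic_class (k : ℕ)
    (L : Type*) [AddCommGroup L] [Module ℤ L] [Module.Free ℤ L] [Module.Finite ℤ L]
    (B : L →ₗ[ℤ] L →ₗ[ℤ] ℤ) (hsymm : ∀ x y, B x y = B y x)
    (ι : L →ₗ[ℤ] (Fin (k+1) → ℝ)) (hinj : Function.Injective ι)
    (hspan : Submodule.span ℝ (Set.range ι) = ⊤)
    (hcompat : ∀ x y : L, (B x y : ℝ) =
      ι x 0 * ι y 0 - ∑ i : Fin k, ι x i.succ * ι y i.succ)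
    (h x p : L) (hh : 0 < B h h) (hx : B x x = 0) (hxh : 0 < B x h)
    (hpp : B p p = -2) (hph : 0 < B p h) (hxp : B x p < 0) :
    B (x + B x p • p) (x + B x p • p) = 0 ∧
    0 < B (x + B x p • p) h ∧ B (x + B x p • p) h < B x h := by
  set x' : L := x + B x p • p with hx'def
  have hpx : B p x = B x p := hsymm p x
  have e1 : B x' x' = B x x + B x p * B p x + B x p * B x p + B x p * B x p * B p p := by
    simp [hx'def, map_add, LinearMap.add_apply, map_smul, LinearMap.smul_apply,
      smul_eq_mul]
    ring
  have iso' : B x' x' = 0 := by rw [e1, hx, hpx, hpp]; ring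
  have e2 : B x' h = B x h + B x p * B p h := by
    simp [hx'def, map_add, LinearMap.add_apply, map_smul, LinearMap.smul_apply,
      smul_eq_mul]
  have e3 : B x' x = B x x + B x p * B p x := by
    simp [hx'def, map_add, LinearMap.add_apply, map_smul, LinearMap.smul_apply,
      smul_eq_mul]
  have hx'x : 0 < B x' x := by
    rw [e3, hx, hpx]
    nlinarith
  -- real components
  set u : Fin k → ℝ := fun i => ι x i.succ with hu
  set v : Fin k → ℝ := fun i => ι x' i.succ with hv
  set w : Fin k → ℝ := fun i => ι h i.succ with hw
  have sq_eq : ∀ (f : Fin k → ℝ), ∑ i, f i * f i = ∑ i, f i ^ 2 := by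
    intro f; exact Finset.sum_congr rfl fun i _ => (sq (f i)).symm
  have hxR : ∑ i, u i ^ 2 ≤ ι x 0 ^ 2 := by
    have := hcompat x x
    rw [hx] at this
    push_cast at this
    rw [sq_eq u] at this
    nlinarith [this]
  have hx'R : ∑ i, v i ^ 2 ≤ ι x' 0 ^ 2 := by
    have := hcompat x' x'
    rw [iso'] at this
    push_cast at this
    rw [sq_eq v] at this
    nlinarith [this]
  have hhR : ∑ i, w i ^ 2 < ι h 0 ^ 2 := by
    have := hcompat h h
    have h0 : (0:ℝ) < (B h h : ℝ) := by exact_mod_cast hh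
    rw [this] at h0
    rw [sq_eq w] at h0
    nlinarith [h0]
  have hxhR : 0 < ι x 0 * ι h 0 - ∑ i, u i * w i := by
    have := hcompat x h
    have h0 : (0:ℝ) < (B x h : ℝ) := by exact_mod_cast hxh
    rw [this] at h0
    exact h0
  have hx'xR : 0 < ι x' 0 * ι x 0 - ∑ i, v i * u i := by
    have := hcompat x' x
    have h0 : (0:ℝ) < (B x' x : ℝ) := by exact_mod_cast hx'x
    rw [this] at h0
    exact h0
  have huw : 0 < ι x 0 * ι h 0 :=
    aux_pos u w _ _ hxR (le_of_lt hhR) hxhR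
  have hvu : 0 < ι x' 0 * ι x 0 :=
    aux_pos v u _ _ hx'R hxR hx'xR
  have hu0 : ι x 0 ≠ 0 := by
    intro h0; rw [h0] at huw; simp at huw
  have hvw : 0 < ι x' 0 * ι h 0 := by
    have hu2 : 0 < ι x 0 ^ 2 := by positivity
    nlinarith [mul_pos hvu huw]
  have hv0 : ι x' 0 ≠ 0 := by
    intro h0; rw [h0] at hvw; simp at hvw
  have key : 0 < ι x' 0 * ι h 0 - ∑ i, v i * w i :=
    aux_final v w _ _ hx'R hhR hv0 hvw
  have hx'hR : (0:ℝ) < (B x' h : ℝ) := by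
    rw [hcompat x' h]; exact key
  have part2 : 0 < B x' h := by exact_mod_cast hx'hR
  refine ⟨iso', part2, ?_⟩
  rw [e2]
  nlinarith
end

section
/- (Consequence of Selberg's lemma) Every finitely generated subgroup Γ of GL(n,ℚ) contains a torsion-free subgroup of finite index. -/
/-- A predicate on a monoid saying that only 1 is of finite order (as in the older Mathlib). -/
def Monoid.IsTorsionFree (G : Type*) [Monoid G] : Prop :=
  ∀ g : G, g ≠ 1 → ¬IsOfFinOrder g

/-!
Choose an odd prime `p` dividing no denominator of an entry of a generator of `Γ` or of its
inverse. Then `Γ` embeds in `GL(n, ℤ_p)`, where the kernel of reduction modulo `p` has finite index.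
That kernel is torsion-free: if `g = 1 + B ≠ 1` with `B ≡ 0 mod p` and `g ^ ℓ = 1` for a prime `ℓ`,
compare the two sides of `ℓ • B = -∑_{2 ≤ k ≤ ℓ} (ℓ.choose k) • B ^ k` at an entry where `‖B i j‖`
is maximal, say equal to `t ≤ 1/p`: the left side has norm `‖ℓ‖ t`, the right side at most
`‖ℓ‖ t²`, since `ℓ ∣ ℓ.choose k` for `k < ℓ`, while for `k = ℓ` either `‖ℓ‖ = 1` or
`ℓ = p ≥ 3` and `t ^ p ≤ t³ ≤ ‖p‖ t²`.
-/

open Function Finset Matrix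

theorem Subgroup.eq_one_of_isOfFinOrder_of_forall_pow_prime {G : Type*} [Group G]
    {K : Subgroup G} (hK : ∀ g ∈ K, ∀ ℓ : ℕ, ℓ.Prime → g ^ ℓ = 1 → g = 1) {g : G}
    (hg : g ∈ K) (hfin : IsOfFinOrder g) : g = 1 := by
  by_contra hne
  have hℓ : (orderOf g).minFac.Prime := Nat.minFac_prime (by rwa [Ne, orderOf_eq_one_iff])
  have hdvd := Nat.minFac_dvd (orderOf g)
  have hord := orderOf_pow_orderOf_div hfin.orderOf_pos.ne' hdvd
  rw [hK _ (K.pow_mem hg _) _ hℓ (by rw [← pow_mul, Nat.div_mul_cancel hdvd, pow_orderOf_eq_one]),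
    orderOf_one] at hord
  exact hℓ.one_lt.ne hord

theorem exists_finiteIndex_isTorsionFree_of_injective {G K Q : Type*} [Group G] [Group K]
    [Group Q] [Finite Q] {ψ : G →* K} (hψ : Injective ψ) (π : K →* Q)
    (hπ : ∀ k ∈ π.ker, IsOfFinOrder k → k = 1) :
    ∃ H : Subgroup G, H.FiniteIndex ∧ Monoid.IsTorsionFree H := by
  refine ⟨(π.comp ψ).ker, Subgroup.finiteIndex_ker _, fun g hg hfin => hg ?_⟩
  have hψg : ψ g = 1 := hπ (ψ g) g.2 ((ψ.comp (Subgroup.subtype _)).isOfFinOrder hfin)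
  exact Subtype.ext (hψ (hψg.trans ψ.map_one.symm))

theorem Units.mem_range_map {M N : Type*} [Monoid M] [Monoid N] {f : M →* N}
    (hf : Injective f) {u : Nˣ} (hu : (u : N) ∈ Set.range f)
    (hu' : ((u⁻¹ : Nˣ) : N) ∈ Set.range f) : u ∈ (Units.map f).range := by
  obtain ⟨a, ha⟩ := hu
  obtain ⟨b, hb⟩ := hu'
  exact ⟨⟨a, b, hf (by simp [ha, hb]), hf (by simp [ha, hb])⟩, Units.ext ha⟩

namespace Matrix.GeneralLinearGroup

variable {ι R S : Type*} [Fintype ι] [DecidableEq ι] [CommRing R] [CommRing S]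

theorem map_injective {f : R →+* S} (hf : Injective f) : Injective (map (n := ι) f) :=
  Units.map_injective (Matrix.map_injective hf)

theorem mem_range_map {f : R →+* S} (hf : Injective f) {g : GL ι S}
    (hg : ∀ i j, g i j ∈ f.range) (hg' : ∀ i j, g⁻¹ i j ∈ f.range) : g ∈ (map f).range := by
  choose a ha using hg
  choose b hb using hg'
  exact Units.mem_range_map (Matrix.map_injective hf)
    ⟨Matrix.of a, by ext i j; exact ha i j⟩ ⟨Matrix.of b, by ext i j; exact hb i j⟩

end Matrix.GeneralLinearGroup

theorem Rat.exists_prime_forall_not_dvd_den {X : Set ℚ} (hX : X.Finite) :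
    ∃ p, p.Prime ∧ p ≠ 2 ∧ ∀ x ∈ X, ¬p ∣ x.den := by
  obtain ⟨N, hN⟩ := (hX.image Rat.den).bddAbove
  obtain ⟨p, hNp, hp⟩ := Nat.exists_infinite_primes (N + 3)
  refine ⟨p, hp, by omega, fun x hx hdvd => ?_⟩
  have := Nat.le_of_dvd x.pos hdvd
  have := hN ⟨x, hx, rfl⟩
  omega

theorem Matrix.norm_pow_apply_le {ι R : Type*} [Fintype ι] [DecidableEq ι] [NormedRing R]
    [IsUltrametricDist R] {B : Matrix ι ι R} {t : ℝ} (hB : ∀ i j, ‖B i j‖ ≤ t) {k : ℕ}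
    (hk : k ≠ 0) (i j : ι) : ‖(B ^ k) i j‖ ≤ t ^ k := by
  have ht : 0 ≤ t := (norm_nonneg _).trans (hB i j)
  obtain ⟨k, rfl⟩ := Nat.exists_eq_add_one_of_ne_zero hk
  clear hk
  induction k generalizing i j with
  | zero => simpa using hB i j
  | succ k ih =>
    rw [pow_succ B, mul_apply, pow_succ t]
    refine IsUltrametricDist.norm_sum_le_of_forall_le_of_nonneg (by positivity) fun l _ => ?_
    exact (norm_mul_le _ _).trans (mul_le_mul (ih i l) (hB l j) (norm_nonneg _) (by positivity))

theorem one_add_pow_eq_one_add_nsmul_add_sum {A : Type*} [Semiring A] (x : A) (n : ℕ) :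
    (1 + x) ^ n = 1 + n • x + ∑ k ∈ Ico 2 (n + 1), n.choose k • x ^ k := by
  rcases n with _ | n
  · simp
  rw [add_comm, (Commute.one_right x).add_pow, range_eq_Ico, sum_eq_sum_Ico_succ_bot (by omega),
    sum_eq_sum_Ico_succ_bot (by omega)]
  simp only [one_pow, mul_one, ← nsmul_eq_mul']
  rw [Nat.choose_zero_right, Nat.choose_one_right, pow_zero, pow_one, one_nsmul, ← add_assoc]

namespace PadicInt

variable {p : ℕ} [Fact p.Prime]

theorem norm_le_inv_of_norm_lt_one {x : ℤ_[p]} (hx : ‖x‖ < 1) : ‖x‖ ≤ (p : ℝ)⁻¹ := by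
  simpa using (norm_le_pow_iff_norm_lt_pow_add_one x (-1)).2 (by simpa using hx)

theorem norm_choose_mul_pow_le (hp : p ≠ 2) {ℓ k : ℕ} (hℓ : ℓ.Prime) (hk : 2 ≤ k) (hkℓ : k ≤ ℓ)
    {t : ℝ} (ht : 0 ≤ t) (htp : t ≤ (p : ℝ)⁻¹) :
    ‖(ℓ.choose k : ℤ_[p])‖ * t ^ k ≤ ‖(ℓ : ℤ_[p])‖ * t ^ 2 := by
  have ht1 : t ≤ 1 :=
    htp.trans (inv_le_one_of_one_le₀ (by exact_mod_cast (Fact.out : p.Prime).one_le))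
  rcases hkℓ.lt_or_eq with hkℓ | rfl
  · obtain ⟨c, hc⟩ := hℓ.dvd_choose_self (by omega) hkℓ
    have hchoose : ‖(ℓ.choose k : ℤ_[p])‖ ≤ ‖(ℓ : ℤ_[p])‖ := by
      rw [hc, Nat.cast_mul, norm_mul]
      exact mul_le_of_le_one_right (norm_nonneg _) (norm_le_one _)
    exact mul_le_mul hchoose (pow_le_pow_of_le_one ht ht1 hk) (by positivity) (norm_nonneg _)
  rw [Nat.choose_self, Nat.cast_one, norm_one, one_mul]
  by_cases hkp : k = p
  · subst hkp
    calc t ^ k ≤ t ^ 3 := pow_le_pow_of_le_one ht ht1 (by have := hℓ.two_le; omega)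
      _ = t * t ^ 2 := by ring
      _ ≤ ‖(k : ℤ_[k])‖ * t ^ 2 := by rw [norm_p]; gcongr
  · rw [norm_natCast_eq_one_iff.2 ((Nat.coprime_primes Fact.out hℓ).2 (Ne.symm hkp)), one_mul]
    exact pow_le_pow_of_le_one ht ht1 hk

variable {ι : Type*} [Fintype ι] [DecidableEq ι]

theorem matrix_eq_zero_of_one_add_pow_eq_one (hp : p ≠ 2) {B : Matrix ι ι ℤ_[p]} (hB : ∀ i j, ‖B i j‖ < 1) {ℓ : ℕ} (hℓ : ℓ.Prime)
    (h : (1 + B) ^ ℓ = 1) : B = 0 := by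
  by_contra hB0
  obtain ⟨i₀, j₀, hne⟩ : ∃ i j, B i j ≠ 0 := by
    by_contra! h'
    exact hB0 (Matrix.ext h')
  obtain ⟨⟨i, j⟩, -, hmax⟩ := exists_max_image univ (fun ij : ι × ι => ‖B ij.1 ij.2‖)
    ⟨(i₀, j₀), mem_univ _⟩
  set t := ‖B i j‖
  have htB : ∀ i' j', ‖B i' j'‖ ≤ t := fun i' j' => hmax (i', j') (mem_univ _)
  have ht0 : 0 < t := (norm_pos_iff.2 hne).trans_le (htB i₀ j₀)
  have htp : t ≤ (p : ℝ)⁻¹ := norm_le_inv_of_norm_lt_one (hB i j)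
  have hℓ0 : 0 < ‖(ℓ : ℤ_[p])‖ := norm_pos_iff.2 (Nat.cast_ne_zero.2 hℓ.ne_zero)
  have hentry : (ℓ : ℤ_[p]) * B i j =
      -∑ k ∈ Ico 2 (ℓ + 1), (ℓ.choose k : ℤ_[p]) * (B ^ k) i j := by
    have := congrFun (congrFun h i) j
    rw [one_add_pow_eq_one_add_nsmul_add_sum] at this
    simp only [Matrix.add_apply, Matrix.smul_apply, Matrix.sum_apply] at this
    simp only [nsmul_eq_mul] at this
    linear_combination this
  have hsum : ‖∑ k ∈ Ico 2 (ℓ + 1), (ℓ.choose k : ℤ_[p]) * (B ^ k) i j‖ ≤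
      ‖(ℓ : ℤ_[p])‖ * t ^ 2 :=
    IsUltrametricDist.norm_sum_le_of_forall_le_of_nonneg (by positivity) fun k hk => by
      rw [mem_Ico] at hk
      calc ‖(ℓ.choose k : ℤ_[p]) * (B ^ k) i j‖ ≤ ‖(ℓ.choose k : ℤ_[p])‖ * t ^ k := by
            rw [norm_mul]; gcongr; exact norm_pow_apply_le htB (by omega) i j
        _ ≤ ‖(ℓ : ℤ_[p])‖ * t ^ 2 := norm_choose_mul_pow_le hp hℓ hk.1 (by omega) ht0.le htp
  have hcompare : ‖(ℓ : ℤ_[p])‖ * t ≤ ‖(ℓ : ℤ_[p])‖ * t ^ 2 := by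
    rwa [← norm_mul, hentry, norm_neg]
  nlinarith [le_of_mul_le_mul_left hcompare hℓ0, hB i j]

theorem eq_one_of_map_toZMod_eq_one_of_pow_eq_one (hp : p ≠ 2) {g : GL ι ℤ_[p]}
    (hg : GeneralLinearGroup.map toZMod g = 1) {ℓ : ℕ} (hℓ : ℓ.Prime) (hgℓ : g ^ ℓ = 1) :
    g = 1 := by
  set B := (g : Matrix ι ι ℤ_[p]) - 1
  have hB : ∀ i j, ‖B i j‖ < 1 := by
    have hmap : toZMod.mapMatrix B = 0 := by
      rw [map_sub, map_one, sub_eq_zero]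
      exact congrArg Units.val hg
    intro i j
    have hij : toZMod (B i j) = 0 := congrFun (congrFun hmap i) j
    rw [← RingHom.mem_ker, ker_toZMod, IsLocalRing.mem_maximalIdeal, mem_nonunits] at hij
    exact hij
  have h1B : 1 + B = g := add_sub_cancel _ _
  have hB0 : B = 0 := matrix_eq_zero_of_one_add_pow_eq_one hp hB hℓ (by
    rw [h1B, ← Units.val_pow_eq_pow_val, hgℓ, Units.val_one])
  exact Units.val_eq_one.1 (sub_eq_zero.1 hB0)

theorem eq_one_of_mem_ker_map_toZMod (hp : p ≠ 2) {g : GL ι ℤ_[p]}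
    (hg : g ∈ (GeneralLinearGroup.map (toZMod (p := p))).ker) (hfin : IsOfFinOrder g) : g = 1 :=
  Subgroup.eq_one_of_isOfFinOrder_of_forall_pow_prime
    (fun _ hu _ hℓ huℓ => eq_one_of_map_toZMod_eq_one_of_pow_eq_one hp hu hℓ huℓ) hg hfin

end PadicInt

namespace Matrix.GeneralLinearGroup

variable {ι : Type*} [Fintype ι] [DecidableEq ι]

theorem exists_prime_forall_not_dvd_den {S : Set (GL ι ℚ)} (hS : S.Finite) :
    ∃ p, p.Prime ∧ p ≠ 2 ∧ ∀ s ∈ S, ∀ i j, ¬p ∣ (s i j).den ∧ ¬p ∣ (s⁻¹ i j).den := by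
  obtain ⟨p, hp, hp2, hX⟩ := Rat.exists_prime_forall_not_dvd_den
    (hS.biUnion fun s _ => Set.finite_iUnion fun i => Set.finite_iUnion fun j =>
      (Set.toFinite {s i j, s⁻¹ i j}))
  refine ⟨p, hp, hp2, fun s hs i j => ⟨hX _ ?_, hX _ ?_⟩⟩ <;>
    exact Set.mem_biUnion hs (Set.mem_iUnion_of_mem i (Set.mem_iUnion_of_mem j (by simp)))

theorem map_ratCast_mem_range_map_coe {p : ℕ} [Fact p.Prime] {g : GL ι ℚ}
    (hg : ∀ i j, ¬p ∣ (g i j).den ∧ ¬p ∣ (g⁻¹ i j).den) :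
    map (Rat.castHom ℚ_[p]) g ∈ (map (PadicInt.Coe.ringHom (p := p))).range := by
  refine mem_range_map (fun _ _ => PadicInt.ext) (fun i j => ?_) (fun i j => ?_)
  · exact ⟨⟨_, Padic.norm_rat_le_one (hg i j).1⟩, rfl⟩
  · rw [← map_inv]
    exact ⟨⟨_, Padic.norm_rat_le_one (hg i j).2⟩, rfl⟩

end Matrix.GeneralLinearGroup

open Matrix.GeneralLinearGroup in
/-- consequence of Selberg's lemma: every finitely generated subgroup of
GL(n,ℚ) contains a torsion-free subgroup of finite index. -/
theorem selberg_lemma (n : ℕ) (Γ : Subgroup (Matrix.GeneralLinearGroup (Fin n) ℚ))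
    (hfg : Group.FG Γ) :
    ∃ H : Subgroup Γ, H.FiniteIndex ∧ Monoid.IsTorsionFree H := by
  obtain ⟨S, rfl, hS⟩ := (Subgroup.fg_iff Γ).1 ((Group.fg_iff_subgroup_fg Γ).1 hfg)
  obtain ⟨p, hp, hp2, hS_den⟩ := exists_prime_forall_not_dvd_den hS
  have : Fact p.Prime := ⟨hp⟩
  let φ : GL (Fin n) ℚ →* GL (Fin n) ℚ_[p] := map (Rat.castHom ℚ_[p])
  let ε : GL (Fin n) ℤ_[p] →* GL (Fin n) ℚ_[p] := map PadicInt.Coe.ringHom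
  have hε : Injective ε := map_injective fun _ _ => PadicInt.ext
  have hrange : ∀ g : Subgroup.closure S, φ g ∈ ε.range := fun g =>
    (Subgroup.closure_le (ε.range.comap φ)).2
      (fun s hs => map_ratCast_mem_range_map_coe (hS_den s hs)) g.2
  let ψ : Subgroup.closure S →* GL (Fin n) ℤ_[p] := (MonoidHom.ofInjective hε).symm.toMonoidHom.comp
    ((φ.comp (Subgroup.closure S).subtype).codRestrict ε.range hrange)
  have hψ : Injective ψ := fun g h hgh => Subtype.ext <| map_injective (Rat.castHom ℚ_[p]).injective
    (congrArg Subtype.val ((MonoidHom.ofInjective hε).symm.injective hgh))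
  exact exists_finiteIndex_isTorsionFree_of_injective hψ (map PadicInt.toZMod)
    (fun _ => PadicInt.eq_one_of_mem_ker_map_toZMod hp2)
end
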